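/- Stubborn Complex Roots Theorem (proved special case): let P(λ) = ∏_{i=1}^{n−2} (p_i − λ) · (λ − (a+bi))(λ − (a−bi)) up to sign, where p₁, ..., p_{n−2} are positive reals, a, b are reals with |a| > |b| and b ≠ 0, and let Q(λ) = c(q₁ − λ) with q₁ > 0 and c real. Suppose |P(0)| > |Q(0)| and that the smallest p_i satisfies min_i p_i < q₁. Then the number of roots (with multiplicity) of S = P + Q with strictly negative real part equals the number of roots of P with strictly negative real part, and likewise for strictly positive real part. In particular, if additionally a > 0, then every root of S has strictly positive real part. -/

import Mathlib

/-!
Along the segment `P + t Q`, `t ∈ [0, 1]`, the degree and leading coefficient stay those of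
`P` (as `deg Q < deg P`), and no root meets the imaginary axis, where `‖Q‖ < ‖P‖`. Since the
roots of a monic polynomial move continuously with its coefficients (as a multiset), the number
of roots in each open half-plane is locally constant in `t`, hence constant on `[0, 1]`.

The domination `‖Q z‖ < ‖P z‖` holds for `Re z ≤ 0` and `(Re z - a)² ≥ a²` (the whole closed
left half-plane when `a > 0`), factor by factor: `‖pᵢ - z‖ ≥ pᵢ`; `‖q₁ - z‖ / q₁ ≤ ‖p - z‖ / p`
for the root `p < q₁`; and `‖z - (a + bi)‖ ‖z - (a - bi)‖ ≥ a² + b²` since `b² ≤ a²`. Together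
`‖Q z‖ / ‖Q 0‖ ≤ ‖P z‖ / ‖P 0‖`, and `‖Q 0‖ < ‖P 0‖`.
-/

open Polynomial Complex Filter Topology

theorem Multiset.Rel.card_filter_eq {α β : Type*} {r : α → β → Prop} {p : α → Prop}
    {q : β → Prop} [DecidablePred p] [DecidablePred q] {s : Multiset α} {t : Multiset β}
    (h : Multiset.Rel r s t) (hpq : ∀ a b, r a b → (p a ↔ q b)) :
    card (s.filter p) = card (t.filter q) := by
  induction h with
  | zero => rfl
  | @cons a b s t hab _ ih => simp [Multiset.filter_cons, hpq a b hab, ih, apply_ite Multiset.card]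

theorem eventually_mem_iff_of_notMem_frontier {X : Type*} [TopologicalSpace X] {s : Set X} {y : X}
    (h : y ∉ frontier s) : ∀ᶠ x in 𝓝 y, (x ∈ s ↔ y ∈ s) := by
  by_cases hy : y ∈ s
  · filter_upwards [mem_interior_iff_mem_nhds.1 ((mem_interior_iff_notMem_frontier hy).2 h)]
      with x hx
    simp [hx, hy]
  · have hy' : y ∈ interior sᶜ := (mem_interior_iff_notMem_frontier hy).2 (by rwa [frontier_compl])
    filter_upwards [mem_interior_iff_mem_nhds.1 hy'] with x hx
    simp_all

theorem Multiset.exists_pos_forall_dist_lt_mem_iff {X : Type*} [PseudoMetricSpace X] {s : Set X}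
    (t : Multiset X) (h : ∀ y ∈ t, y ∉ frontier s) :
    ∃ ρ > 0, ∀ y ∈ t, ∀ x, dist x y < ρ → (x ∈ s ↔ y ∈ s) := by
  induction t using Multiset.induction_on with
  | empty => exact ⟨1, one_pos, by simp⟩
  | cons y t ih =>
    obtain ⟨ρ, hρ, ht⟩ := ih fun z hz => h z (Multiset.mem_cons_of_mem hz)
    obtain ⟨ε, hε, hy⟩ := Metric.eventually_nhds_iff.1
      (eventually_mem_iff_of_notMem_frontier (h y (Multiset.mem_cons_self y t)))
    refine ⟨min ε ρ, lt_min hε hρ, fun z hz x hx => ?_⟩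
    rcases Multiset.mem_cons.1 hz with rfl | hz
    · exact hy (hx.trans_le (min_le_left _ _))
    · exact ht z hz x (hx.trans_le (min_le_right _ _))

namespace Polynomial

theorem roots_eq_cons_roots_divByMonic {R : Type*} [CommRing R] [IsDomain R] {f : R[X]} {a : R}
    (hf : f ≠ 0) (ha : f.IsRoot a) : f.roots = a ::ₘ (f /ₘ (X - C a)).roots := by
  have hmul := mul_divByMonic_eq_iff_isRoot.2 ha
  conv_lhs => rw [← hmul]
  rw [roots_mul (by rwa [hmul]), roots_X_sub_C, Multiset.singleton_add]

theorem Monic.divByMonic_X_sub_C {R : Type*} [CommRing R] {f : R[X]} {a : R} (hf : f.Monic)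
    (ha : f.IsRoot a) : (f /ₘ (X - C a)).Monic :=
  (monic_X_sub_C a).of_mul_monic_left (by rwa [mul_divByMonic_eq_iff_isRoot.2 ha])

theorem exists_mem_roots_dist_pow_le {K : Type*} [NormedField K] [IsAlgClosed K] {g : K[X]}
    (hg : g.Monic) (hd : 0 < g.natDegree) (z : K) :
    ∃ r ∈ g.roots, dist z r ^ g.natDegree ≤ ‖g.eval z‖ := by
  classical
  have hne : g.roots.toFinset.Nonempty := by
    rw [Multiset.toFinset_nonempty, ← Multiset.card_pos, IsAlgClosed.card_roots_eq_natDegree]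
    exact hd
  obtain ⟨r, hr, hmin⟩ := g.roots.toFinset.exists_min_image (dist z) hne
  rw [Multiset.mem_toFinset] at hr
  refine ⟨r, hr, ?_⟩
  have hnorm : ‖g.eval z‖ = (g.roots.map (dist z)).prod := by
    rw [(IsAlgClosed.splits g).eval_eq_prod_roots_of_monic hg, ← normHom_apply,
      map_multiset_prod, Multiset.map_map]
    simp only [Function.comp_def, normHom_apply, dist_eq_norm]
  calc dist z r ^ g.natDegree = (g.roots.map fun _ => dist z r).prod := by
        rw [Multiset.map_const', Multiset.prod_replicate, IsAlgClosed.card_roots_eq_natDegree]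
    _ ≤ (g.roots.map (dist z)).prod :=
        Multiset.prod_map_le_prod_map₀ _ _ (fun _ _ => dist_nonneg)
          fun y hy => hmin y (Multiset.mem_toFinset.2 hy)
    _ = ‖g.eval z‖ := hnorm.symm

section Continuity

variable {ι R : Type*} {l : Filter ι}

theorem tendsto_eval_of_tendsto_coeff [Semiring R] [TopologicalSpace R] [IsTopologicalSemiring R]
    {G : ι → R[X]} {g : R[X]} {N : ℕ} (hG : ∀ i, (G i).natDegree < N) (hg : g.natDegree < N)
    (hcoeff : ∀ j, Tendsto (fun i => (G i).coeff j) l (𝓝 (g.coeff j))) (z : R) :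
    Tendsto (fun i => (G i).eval z) l (𝓝 (g.eval z)) := by
  simp only [eval_eq_sum_range' (hG _), eval_eq_sum_range' hg]
  exact tendsto_finsetSum _ fun j _ => (hcoeff j).mul_const _

theorem tendsto_coeff_divByMonic_X_sub_C [CommRing R] [TopologicalSpace R]
    [IsTopologicalRing R] {G : ι → R[X]} {g : R[X]} (hdeg : ∀ i, (G i).natDegree = g.natDegree)
    (hcoeff : ∀ j, Tendsto (fun i => (G i).coeff j) l (𝓝 (g.coeff j)))
    {r : ι → R} {z : R} (hr : Tendsto r l (𝓝 z)) (j : ℕ) :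
    Tendsto (fun i => (G i /ₘ (X - C (r i))).coeff j) l (𝓝 ((g /ₘ (X - C z)).coeff j)) := by
  simp only [coeff_divByMonic_X_sub_C, hdeg]
  exact tendsto_finsetSum _ fun k _ => (hr.pow _).mul (hcoeff k)

variable [NormedField R] [IsAlgClosed R] {G : ι → R[X]} {g : R[X]}

theorem exists_tendsto_mem_roots (hG : ∀ i, (G i).Monic)
    (hdeg : ∀ i, (G i).natDegree = g.natDegree) (hd : 0 < g.natDegree)
    (hcoeff : ∀ j, Tendsto (fun i => (G i).coeff j) l (𝓝 (g.coeff j))) {z : R}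
    (hz : g.IsRoot z) : ∃ r : ι → R, (∀ i, r i ∈ (G i).roots) ∧ Tendsto r l (𝓝 z) := by
  choose r hr hdist using fun i => exists_mem_roots_dist_pow_le (hG i) (hdeg i ▸ hd) z
  refine ⟨r, hr, Metric.tendsto_nhds.2 fun ε hε => ?_⟩
  have heval : Tendsto (fun i => (G i).eval z) l (𝓝 0) := by
    simpa only [hz.eq_zero] using tendsto_eval_of_tendsto_coeff
      (fun i => (hdeg i).trans_lt g.natDegree.lt_succ_self) g.natDegree.lt_succ_self hcoeff z
  filter_upwards [heval.norm.eventually_lt_const (by simpa using pow_pos hε g.natDegree)]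
    with i hi
  rw [dist_comm]
  exact lt_of_pow_lt_pow_left₀ _ hε.le ((hdeg i ▸ hdist i).trans_lt hi)

theorem eventually_rel_roots_dist_lt (hg : g.Monic) (hG : ∀ i, (G i).Monic)
    (hdeg : ∀ i, (G i).natDegree = g.natDegree)
    (hcoeff : ∀ j, Tendsto (fun i => (G i).coeff j) l (𝓝 (g.coeff j))) {ρ : ℝ} (hρ : 0 < ρ) :
    ∀ᶠ i in l, Multiset.Rel (fun x y => dist x y < ρ) (G i).roots g.roots := by
  induction hn : g.natDegree generalizing G g with
  | zero =>
    refine .of_forall fun i => ?_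
    rw [hg.natDegree_eq_zero.1 hn, (hG i).natDegree_eq_zero.1 (hn ▸ hdeg i), roots_one]
    exact .zero
  | succ n ih =>
    obtain ⟨z, hz⟩ := IsAlgClosed.exists_root g (by
      rw [degree_eq_natDegree hg.ne_zero, hn]; exact_mod_cast n.succ_ne_zero)
    obtain ⟨r, hr, hrz⟩ := exists_tendsto_mem_roots hG hdeg (by omega) hcoeff hz
    have hrootG : ∀ i, (G i).IsRoot (r i) := fun i => isRoot_of_mem_roots (hr i)
    have hquot := ih (hg.divByMonic_X_sub_C hz) (fun i => (hG i).divByMonic_X_sub_C (hrootG i))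
      (fun i => by simp [natDegree_divByMonic _ (monic_X_sub_C _), hdeg])
      (tendsto_coeff_divByMonic_X_sub_C hdeg hcoeff hrz)
      (by simp [natDegree_divByMonic _ (monic_X_sub_C _), hn])
    filter_upwards [hquot, Metric.tendsto_nhds.1 hrz ρ hρ] with i hi hri
    rw [roots_eq_cons_roots_divByMonic (hG i).ne_zero (hrootG i),
      roots_eq_cons_roots_divByMonic hg.ne_zero hz]
    exact hi.cons hri

end Continuity

theorem eventually_rel_roots_add_C_mul {K : Type*} [NormedField K] [IsAlgClosed K] {P Q : K[X]}
    (hdeg : Q.natDegree < P.natDegree) (t₀ : K) {ρ : ℝ} (hρ : 0 < ρ) :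
    ∀ᶠ t in 𝓝 t₀, Multiset.Rel (fun x y => dist x y < ρ) (P + C t * Q).roots
      (P + C t₀ * Q).roots := by
  have hP : P ≠ 0 := ne_zero_of_natDegree_gt hdeg
  have hlt : ∀ t, (C t * Q).degree < P.degree := fun t =>
    degree_lt_degree ((natDegree_C_mul_le t Q).trans_lt hdeg)
  have hc : P.leadingCoeff⁻¹ ≠ 0 := inv_ne_zero (leadingCoeff_ne_zero.2 hP)
  set G : K → K[X] := fun t => C P.leadingCoeff⁻¹ * (P + C t * Q)
  have hG : ∀ t, (G t).Monic := fun t => by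
    rw [Monic, leadingCoeff_C_mul_of_isUnit (isUnit_iff_ne_zero.2 hc),
      leadingCoeff_add_of_degree_lt' (hlt t), inv_mul_cancel₀ (leadingCoeff_ne_zero.2 hP)]
  have hGdeg : ∀ t, (G t).natDegree = P.natDegree := fun t => by
    rw [natDegree_C_mul hc, natDegree_add_eq_left_of_degree_lt (hlt t)]
  have hcoeff : ∀ j, Tendsto (fun t => (G t).coeff j) (𝓝 t₀) (𝓝 ((G t₀).coeff j)) := fun j => by
    simp only [G, coeff_C_mul, coeff_add]
    exact (Continuous.tendsto (by fun_prop) t₀)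
  simpa only [G, roots_C_mul _ hc] using
    eventually_rel_roots_dist_lt (hG t₀) hG (fun t => (hGdeg t).trans (hGdeg t₀).symm) hcoeff hρ

theorem card_roots_filter_add_eq {P Q : ℂ[X]} (hdeg : Q.natDegree < P.natDegree)
    (p : ℂ → Prop) [DecidablePred p]
    (hdom : ∀ z ∈ frontier {z | p z}, ‖Q.eval z‖ < ‖P.eval z‖) :
    Multiset.card ((P + Q).roots.filter p) = Multiset.card (P.roots.filter p) := by
  set N : ℝ → ℕ := fun t => Multiset.card ((P + C (t : ℂ) * Q).roots.filter p)
  have hfront : ∀ t ∈ Set.Icc (0 : ℝ) 1, ∀ z ∈ (P + C (t : ℂ) * Q).roots,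
      z ∉ frontier {z | p z} := by
    intro t ht z hz hzf
    have hPz : P.eval z = -(t * Q.eval z) :=
      eq_neg_of_add_eq_zero_left (by simpa using (isRoot_of_mem_roots hz).eq_zero)
    refine (hdom z hzf).not_ge ?_
    rw [hPz, norm_neg, norm_mul, Complex.norm_real, Real.norm_of_nonneg ht.1]
    exact mul_le_of_le_one_left (norm_nonneg _) ht.2
  have hN : ContinuousOn N (Set.Icc 0 1) := by
    intro t₀ ht₀
    obtain ⟨ρ, hρ, hsep⟩ := Multiset.exists_pos_forall_dist_lt_mem_iff _ (hfront t₀ ht₀)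
    refine ((continuousAt_const (y := N t₀)).congr ?_).continuousWithinAt
    filter_upwards [Complex.continuous_ofReal.continuousAt.eventually
      (eventually_rel_roots_add_C_mul hdeg t₀ hρ)] with t ht
    exact ((ht.mono fun x _ y hy hxy => hsep y hy x hxy).card_filter_eq fun _ _ h => h).symm
  simpa [N] using isPreconnected_Icc.constant hN (Set.right_mem_Icc.2 zero_le_one)
    (Set.left_mem_Icc.2 zero_le_one)

end Polynomial

namespace Complex

theorem le_norm_ofReal_sub_of_re_nonpos {p : ℝ} {z : ℂ} (hz : z.re ≤ 0) :
    p ≤ ‖(p : ℂ) - z‖ :=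
  calc p ≤ ((p : ℂ) - z).re := by rw [sub_re, ofReal_re]; linarith
    _ ≤ ‖(p : ℂ) - z‖ := re_le_norm _

theorem mul_norm_ofReal_sub_le {p q : ℝ} {z : ℂ} (hp : 0 ≤ p) (hpq : p ≤ q) (hz : z.re ≤ 0) :
    p * ‖(q : ℂ) - z‖ ≤ q * ‖(p : ℂ) - z‖ := by
  have hq : 0 ≤ q := hp.trans hpq
  refine (pow_le_pow_iff_left₀ (by positivity) (by positivity) two_ne_zero).1 ?_
  simp only [mul_pow, Complex.sq_norm, normSq_apply, sub_re, sub_im, ofReal_re, ofReal_im]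
  have h1 : 0 ≤ p * (q - z.re) := by nlinarith
  have h2 : p * (q - z.re) ≤ q * (p - z.re) := by nlinarith
  nlinarith [mul_le_mul h2 h2 h1 (h1.trans h2), mul_le_mul hpq hpq hp hq, sq_nonneg z.im]

theorem sq_add_sq_le_norm_sub_mul_norm_sub {a b : ℝ} {z : ℂ} (hba : b ^ 2 ≤ a ^ 2)
    (hz : a ^ 2 ≤ (z.re - a) ^ 2) :
    a ^ 2 + b ^ 2 ≤ ‖z - (a + b * I)‖ * ‖z - (a - b * I)‖ := by
  refine (pow_le_pow_iff_left₀ (by positivity) (by positivity) two_ne_zero).1 ?_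
  simp only [mul_pow, Complex.sq_norm, normSq_apply, sub_re, sub_im, add_re, add_im, mul_re, mul_im,
    ofReal_re, ofReal_im, I_re, I_im]
  have hsq := mul_le_mul hz hz (sq_nonneg a) (sq_nonneg _)
  have hmul : a ^ 2 * (z.im ^ 2 + b ^ 2) ≤ (z.re - a) ^ 2 * (z.im ^ 2 + b ^ 2) :=
    mul_le_mul_of_nonneg_right hz (by positivity)
  nlinarith [sq_nonneg z.im, sq_nonneg (z.im ^ 2), mul_nonneg (sq_nonneg z.im) (sub_nonneg.2 hba)]

theorem norm_ofReal_mul_norm_ofReal_sub_mul_I (a b : ℝ) :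
    ‖(a : ℂ) + b * I‖ * ‖(a : ℂ) - b * I‖ = a ^ 2 + b ^ 2 := by
  rw [← norm_mul, show ((a : ℂ) + b * I) * (a - b * I) = ((a ^ 2 + b ^ 2 : ℝ) : ℂ) by
    push_cast; ring_nf; rw [I_sq]; ring, norm_real, Real.norm_of_nonneg (by positivity)]

theorem prod_mul_norm_ofReal_sub_le {ι : Type*} [Fintype ι] {p : ι → ℝ} (hp : ∀ i, 0 ≤ p i)
    {q : ℝ} {i₀ : ι} (hi₀ : p i₀ ≤ q) {z : ℂ} (hz : z.re ≤ 0) :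
    (∏ i, p i) * ‖(q : ℂ) - z‖ ≤ q * ∏ i, ‖(p i : ℂ) - z‖ := by
  classical
  rw [← Finset.mul_prod_erase _ _ (Finset.mem_univ i₀),
    ← Finset.mul_prod_erase _ (fun i => ‖(p i : ℂ) - z‖) (Finset.mem_univ i₀)]
  calc p i₀ * (∏ i ∈ Finset.univ.erase i₀, p i) * ‖(q : ℂ) - z‖
      = (p i₀ * ‖(q : ℂ) - z‖) * ∏ i ∈ Finset.univ.erase i₀, p i := by ring
    _ ≤ (q * ‖(p i₀ : ℂ) - z‖) * ∏ i ∈ Finset.univ.erase i₀, ‖(p i : ℂ) - z‖ :=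
        mul_le_mul (mul_norm_ofReal_sub_le (hp i₀) hi₀ hz)
          (Finset.prod_le_prod (fun i _ => hp i) fun i _ => le_norm_ofReal_sub_of_re_nonpos hz)
          (Finset.prod_nonneg fun i _ => hp i)
          (mul_nonneg ((hp i₀).trans hi₀) (norm_nonneg _))
    _ = q * (‖(p i₀ : ℂ) - z‖ * ∏ i ∈ Finset.univ.erase i₀, ‖(p i : ℂ) - z‖) := by ring

theorem abs_mul_norm_sub_lt_of_re_nonpos {ι : Type*} [Fintype ι] {p : ι → ℝ}
    (hp : ∀ i, 0 ≤ p i) {a b q c ε : ℝ} (hba : b ^ 2 ≤ a ^ 2) (hq : 0 < q) {i₀ : ι} (hi₀ : p i₀ < q)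
    (h0 : |c| * q < |ε| * ((∏ i, p i) * (a ^ 2 + b ^ 2))) {z : ℂ} (hz : z.re ≤ 0)
    (hza : a ^ 2 ≤ (z.re - a) ^ 2) :
    |c| * ‖(q : ℂ) - z‖ <
      |ε| * ((∏ i, ‖(p i : ℂ) - z‖) * (‖z - (a + b * I)‖ * ‖z - (a - b * I)‖)) := by
  have hqz : 0 < ‖(q : ℂ) - z‖ := hq.trans_le (le_norm_ofReal_sub_of_re_nonpos hz)
  refine lt_of_mul_lt_mul_left ?_ hq.le
  calc q * (|c| * ‖(q : ℂ) - z‖) = |c| * q * ‖(q : ℂ) - z‖ := by ring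
    _ < |ε| * ((∏ i, p i) * (a ^ 2 + b ^ 2)) * ‖(q : ℂ) - z‖ := by gcongr
    _ = |ε| * (a ^ 2 + b ^ 2) * ((∏ i, p i) * ‖(q : ℂ) - z‖) := by ring
    _ ≤ |ε| * (‖z - (a + b * I)‖ * ‖z - (a - b * I)‖) * (q * ∏ i, ‖(p i : ℂ) - z‖) := by
      have hpos : 0 ≤ (∏ i, p i) * ‖(q : ℂ) - z‖ :=
        mul_nonneg (Finset.prod_nonneg fun i _ => hp i) (norm_nonneg _)
      gcongr |ε| * ?_ * ?_
      · exact sq_add_sq_le_norm_sub_mul_norm_sub hba hza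
      · exact prod_mul_norm_ofReal_sub_le hp hi₀.le hz
    _ = q * (|ε| * ((∏ i, ‖(p i : ℂ) - z‖) * (‖z - (a + b * I)‖ * ‖z - (a - b * I)‖))) := by
      ring

end Complex

theorem stubborn_complex_roots_special_case_general (n : ℕ)
    (p : Fin (n - 2) → ℝ) (hp : ∀ i, 0 < p i)
    (a b : ℝ) (hab : |b| < |a|)
    (q₁ c : ℝ) (hq₁ : 0 < q₁)
    (ε : ℝ)
    (P Q : Polynomial ℂ)
    (hP : P = Polynomial.C (ε : ℂ) *
      ((∏ i, (Polynomial.C ((p i : ℝ) : ℂ) - Polynomial.X)) *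
        ((Polynomial.X - Polynomial.C (↑a + ↑b * Complex.I)) *
          (Polynomial.X - Polynomial.C (↑a - ↑b * Complex.I)))))
    (hQ : Q = Polynomial.C (c : ℂ) * (Polynomial.C ((q₁ : ℝ) : ℂ) - Polynomial.X))
    (h0 : ‖Q.eval 0‖ < ‖P.eval 0‖)
    (hmin : ∃ i, p i < q₁) :
    (Multiset.card (((P + Q).roots).filter fun z => z.re < 0) =
        Multiset.card ((P.roots).filter fun z => z.re < 0)) ∧
    (Multiset.card (((P + Q).roots).filter fun z => 0 < z.re) =
        Multiset.card ((P.roots).filter fun z => 0 < z.re)) ∧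
    (0 < a → ∀ z : ℂ, (P + Q).eval z = 0 → 0 < z.re) := by
  obtain ⟨i₀, hi₀⟩ := hmin
  have hPz : ∀ z, ‖P.eval z‖ =
      |ε| * ((∏ i, ‖(p i : ℂ) - z‖) * (‖z - (a + b * I)‖ * ‖z - (a - b * I)‖)) := by
    intro z
    simp only [hP, eval_mul, eval_C, eval_prod, eval_sub, eval_X, norm_mul, norm_prod,
      Complex.norm_real, Real.norm_eq_abs]
  have hQz : ∀ z, ‖Q.eval z‖ = |c| * ‖(q₁ : ℂ) - z‖ := by simp [hQ]
  have hdom : ∀ z : ℂ, z.re ≤ 0 → a ^ 2 ≤ (z.re - a) ^ 2 → ‖Q.eval z‖ < ‖P.eval z‖ := by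
    intro z hz hza
    rw [hPz, hQz]
    refine abs_mul_norm_sub_lt_of_re_nonpos (fun i => (hp i).le) (sq_le_sq.2 hab.le) hq₁ hi₀ ?_
      hz hza
    rw [hPz, hQz] at h0
    simpa only [sub_zero, zero_sub, norm_neg, Complex.norm_real, Real.norm_eq_abs,
      abs_of_pos hq₁, abs_of_pos (hp _), norm_ofReal_mul_norm_ofReal_sub_mul_I] using h0
  have hdeg : Q.natDegree < P.natDegree := by
    have hP0 : P ≠ 0 := fun h => (norm_nonneg _).not_gt (by simpa [h] using h0)
    calc Q.natDegree ≤ 1 := by rw [hQ]; compute_degree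
      _ < ((X - C (a + b * I)) * (X - C (a - b * I))).natDegree := by
          rw [natDegree_mul (X_sub_C_ne_zero _) (X_sub_C_ne_zero _), natDegree_X_sub_C,
            natDegree_X_sub_C]
          norm_num
      _ ≤ P.natDegree := natDegree_le_of_dvd (by
          rw [hP]; exact dvd_mul_of_dvd_right (dvd_mul_left _ _) _) hP0
  refine ⟨card_roots_filter_add_eq hdeg _ ?_, card_roots_filter_add_eq hdeg _ ?_, ?_⟩
  · simp only [frontier_setOfPred_re_lt, Set.mem_ofPred_eq]
    exact fun z hz => hdom z hz.le (by simp [hz])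
  · simp only [frontier_setOfPred_lt_re, Set.mem_ofPred_eq]
    exact fun z hz => hdom z hz.le (by simp [hz])
  · intro ha z hz
    by_contra! hre
    refine (hdom z hre (by nlinarith)).ne ?_
    rw [eval_add] at hz
    rw [eq_neg_of_add_eq_zero_left hz, norm_neg]

/-- **Stubborn Complex Roots Theorem (proved special case).**  Let
`P(λ) = ε · ∏_{i=1}^{n−2} (pᵢ − λ) · (λ − (a+bi)) (λ − (a−bi))` (with sign `ε = ±1`),
where `p₁, …, p_{n−2}` are positive reals, `a, b` are reals with `|a| > |b|` and
`b ≠ 0`, and `Q(λ) = c (q₁ − λ)` with `q₁ > 0` and `c` real, `c ≠ 0`.  If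
`|P(0)| > |Q(0)|` and the smallest `pᵢ` satisfies `min pᵢ < q₁`, then `S = P + Q` has
the same number of roots (with multiplicity) with strictly negative (resp. strictly
positive) real part as `P`; in particular, if moreover `a > 0`, every root of `S` has
strictly positive real part. -/
theorem stubborn_complex_roots_special_case (n : ℕ) (hn : 3 ≤ n)
    (p : Fin (n - 2) → ℝ) (hp : ∀ i, 0 < p i)
    (a b : ℝ) (hab : |b| < |a|) (hb : b ≠ 0)
    (q₁ c : ℝ) (hq₁ : 0 < q₁) (hc : c ≠ 0)
    (ε : ℝ) (hε : ε = 1 ∨ ε = -1)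
    (P Q : Polynomial ℂ)
    (hP : P = Polynomial.C (ε : ℂ) *
      ((∏ i, (Polynomial.C ((p i : ℝ) : ℂ) - Polynomial.X)) *
        ((Polynomial.X - Polynomial.C (↑a + ↑b * Complex.I)) *
          (Polynomial.X - Polynomial.C (↑a - ↑b * Complex.I)))))
    (hQ : Q = Polynomial.C (c : ℂ) * (Polynomial.C ((q₁ : ℝ) : ℂ) - Polynomial.X))
    (h0 : ‖Q.eval 0‖ < ‖P.eval 0‖)
    (hmin : ∃ i, p i < q₁) :
    (Multiset.card (((P + Q).roots).filter fun z => z.re < 0) =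
        Multiset.card ((P.roots).filter fun z => z.re < 0)) ∧
    (Multiset.card (((P + Q).roots).filter fun z => 0 < z.re) =
        Multiset.card ((P.roots).filter fun z => 0 < z.re)) ∧
    (0 < a → ∀ z : ℂ, (P + Q).eval z = 0 → 0 < z.re) :=
  stubborn_complex_roots_special_case_general n p hp a b hab q₁ c hq₁ ε P Q hP hQ h0 hmin
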